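/- arXiv:1703.01700 — 4 statements merged into one kernel-verified Lean document; each statement's English description precedes it below -/
import Mathlib

section
/- Let (X,κ) be a digital image and let A be a nonempty subset of X such that Bd_X^κ(A) is κ-connected. Then the multivalued function g : X ⊸ A defined by g(x) = {x} if x ∈ A, and g(x) = Bd_X^κ(A) if x ∈ X \ A, is connectivity preserving. -/
/-- `a ⩦ b` : `a = b` or `a`, `b` are adjacent. -/
def AdjEq {α : Type*} (adj : α → α → Prop) (a b : α) : Prop := a = b ∨ adj a b

/-- `A` and `B` are adjacent sets: some point of `A` is equal or adjacent to some
point of `B`. -/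
def AdjSets {α : Type*} (adj : α → α → Prop) (A B : Set α) : Prop :=
  ∃ a ∈ A, ∃ b ∈ B, AdjEq adj a b

/-- A subset `A` of a digital image is connected: any two of its points are joined by a
path of consecutively adjacent points lying in `A`. -/
def ConnectedIn {α : Type*} (adj : α → α → Prop) (A : Set α) : Prop :=
  ∀ a ∈ A, ∀ b ∈ A, ∃ (m : ℕ) (y : ℕ → α), y 0 = a ∧ y m = b ∧
    (∀ i ≤ m, y i ∈ A) ∧ ∀ i < m, adj (y i) (y (i + 1))

/-- Image of a set under a multivalued function: `F(A) = ⋃_{x ∈ A} F(x)`. -/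
def mImage {α β : Type*} (F : α → Set β) (A : Set α) : Set β := ⋃ x ∈ A, F x

/-- Weak continuity of a multivalued function. -/
def WeaklyContinuous {α β : Type*} (adjX : α → α → Prop) (adjY : β → β → Prop)
    (F : α → Set β) : Prop :=
  ∀ x x', adjX x x' → AdjSets adjY (F x) (F x')

/-- Strong continuity of a multivalued function. -/
def StronglyContinuous {α β : Type*} (adjX : α → α → Prop) (adjY : β → β → Prop)
    (F : α → Set β) : Prop :=
  ∀ x x', adjX x x' →
    (∀ y ∈ F x, ∃ y' ∈ F x', AdjEq adjY y y') ∧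
    (∀ y' ∈ F x', ∃ y ∈ F x, AdjEq adjY y y')

/-- A multivalued function is connectivity preserving if the image of each connected
set is connected. -/
def ConnPreserving {α β : Type*} (adjX : α → α → Prop) (adjY : β → β → Prop)
    (F : α → Set β) : Prop :=
  ∀ A : Set α, ConnectedIn adjX A → ConnectedIn adjY (mImage F A)

/-- A multivalued function is a surjection if every point of the codomain lies in some
point image. -/
def MSurjective {α β : Type*} (F : α → Set β) : Prop := ∀ y, ∃ x, y ∈ F x

/-- The boundary of `A` in `X`: points of `A` adjacent to a point of `X \ A`. -/
def Bd {α : Type*} (adj : α → α → Prop) (A : Set α) : Set α :=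
  {a | a ∈ A ∧ ∃ b, b ∉ A ∧ adj b a}

/-! A connected set `B` is swept along a path `x₀, x₁, …` in `B`; since each `g(xᵢ)` is connected
and `g(xᵢ)`, `g(xᵢ₊₁)` touch whenever they are nonempty, the points of `g(B)` reached from a
fixed point of `g(x₀)` propagate from `g(xᵢ)` to `g(xᵢ₊₁)`. The images touch because a point of
`A` adjacent to some `x ∉ A` lies in `Bd(A) = g(x)`. -/

open Relation

/-- A step of a path inside `S`; the start of a path is required to lie in `S` separately. -/
def AdjWithin {α : Type*} (adj : α → α → Prop) (S : Set α) (x y : α) : Prop :=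
  adj x y ∧ y ∈ S

section Paths

variable {α : Type*} {adj : α → α → Prop} {S : Set α}

lemma reflTransGen_adjWithin_of_path {m : ℕ} {y : ℕ → α} (hyS : ∀ i ≤ m, y i ∈ S)
    (hy : ∀ i < m, adj (y i) (y (i + 1))) :
    ∀ i ≤ m, ReflTransGen (AdjWithin adj S) (y 0) (y i) := by
  intro i hi
  induction i with
  | zero => exact ReflTransGen.refl
  | succ i ih => exact (ih (by omega)).tail ⟨hy i (by omega), hyS (i + 1) hi⟩

lemma exists_path_of_reflTransGen_adjWithin {a b : α} (ha : a ∈ S)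
    (h : ReflTransGen (AdjWithin adj S) a b) :
    ∃ (m : ℕ) (y : ℕ → α), y 0 = a ∧ y m = b ∧
      (∀ i ≤ m, y i ∈ S) ∧ ∀ i < m, adj (y i) (y (i + 1)) := by
  induction h with
  | refl => exact ⟨0, fun _ => a, rfl, rfl, fun _ _ => ha, fun i hi => absurd hi i.not_lt_zero⟩
  | @tail b c _ hbc ih =>
    obtain ⟨m, y, hy0, hym, hyS, hy⟩ := ih
    have hy' : ∀ i ≤ m, Function.update y (m + 1) c i = y i := fun i hi =>
      Function.update_of_ne (by omega) c y
    refine ⟨m + 1, Function.update y (m + 1) c, by rw [hy' 0 m.zero_le, hy0],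
      Function.update_self .., fun i hi => ?_, fun i hi => ?_⟩
    · rcases hi.lt_or_eq with hi | rfl
      · rw [hy' i (by omega)]; exact hyS i (by omega)
      · rw [Function.update_self]; exact hbc.2
    · rw [hy' i (by omega)]
      rcases (Nat.lt_succ_iff.mp hi).lt_or_eq with hi | rfl
      · rw [hy' (i + 1) hi]; exact hy i hi
      · rw [Function.update_self, hym]; exact hbc.1

theorem connectedIn_iff_reflTransGen :
    ConnectedIn adj S ↔ ∀ a ∈ S, ∀ b ∈ S, ReflTransGen (AdjWithin adj S) a b := by
  refine ⟨fun hS a ha b hb => ?_, fun hS a ha b hb =>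
    exists_path_of_reflTransGen_adjWithin ha (hS a ha b hb)⟩
  obtain ⟨m, y, rfl, rfl, hyS, hy⟩ := hS a ha b hb
  exact reflTransGen_adjWithin_of_path hyS hy m le_rfl

lemma connectedIn_singleton (x : α) : ConnectedIn adj {x} :=
  connectedIn_iff_reflTransGen.mpr fun a ha b hb => by
    rw [Set.mem_singleton_iff] at ha hb
    rw [ha, hb]

lemma adjSets_of_mem_of_mem {A B : Set α} {a : α} (hA : a ∈ A) (hB : a ∈ B) :
    AdjSets adj A B :=
  ⟨a, hA, a, hB, Or.inl rfl⟩

end Paths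

theorem connPreserving_of_connectedIn_of_adjSets {α β : Type*} {adjX : α → α → Prop}
    {adjY : β → β → Prop} {F : α → Set β} (hF : ∀ x, ConnectedIn adjY (F x))
    (hFadj : ∀ x x', adjX x x' → (F x).Nonempty → AdjSets adjY (F x) (F x')) :
    ConnPreserving adjX adjY F := by
  intro B hB
  rw [connectedIn_iff_reflTransGen] at hB ⊢
  set R := AdjWithin adjY (mImage F B)
  have subset_image {x} (hx : x ∈ B) : F x ⊆ mImage F B := Set.subset_biUnion_of_mem hx
  have reach_within {x} (hx : x ∈ B) {u v} (hu : u ∈ F x) (hv : v ∈ F x) :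
      ReflTransGen R u v :=
    ReflTransGen.mono (fun _ _ h => ⟨h.1, subset_image hx h.2⟩) _ _
      (connectedIn_iff_reflTransGen.mp (hF x) u hu v hv)
  intro a' ha' b' hb'
  obtain ⟨a, ha, ha'⟩ := Set.mem_iUnion₂.mp ha'
  obtain ⟨b, hb, hb'⟩ := Set.mem_iUnion₂.mp hb'
  have propagate : ∀ x, ReflTransGen (AdjWithin adjX B) a x →
      x ∈ B ∧ ∃ w ∈ F x, ReflTransGen R a' w := by
    intro x hax
    induction hax with
    | refl => exact ⟨ha, a', ha', ReflTransGen.refl⟩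
    | @tail x x' _ hxx' ih =>
      obtain ⟨hx, w, hw, ha'w⟩ := ih
      obtain ⟨u, hu, v, hv, huv⟩ := hFadj x x' hxx'.1 ⟨w, hw⟩
      refine ⟨hxx'.2, v, hv, ha'w.trans ((reach_within hx hw hu).trans ?_)⟩
      rcases huv with rfl | huv
      · exact ReflTransGen.refl
      · exact ReflTransGen.single ⟨huv, subset_image hxx'.2 hv⟩
  obtain ⟨-, w, hw, ha'w⟩ := propagate b (hB a ha b hb)
  exact ha'w.trans (reach_within hb hw hb')

theorem boundary_retraction_connectivity_preserving_general {X : Type*}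
    (κ : X → X → Prop) (hκs : Symmetric κ)
    (A : Set X)
    (hBd : ConnectedIn κ (Bd κ A))
    (g : X → Set X)
    (hgA : ∀ x ∈ A, g x = {x})
    (hgX : ∀ x ∉ A, g x = Bd κ A) :
    ConnPreserving κ κ g := by
  refine connPreserving_of_connectedIn_of_adjSets (fun x => ?_) fun x x' hxx' hne => ?_
  · by_cases hx : x ∈ A
    · rw [hgA x hx]; exact connectedIn_singleton x
    · rw [hgX x hx]; exact hBd
  by_cases hx : x ∈ A <;> by_cases hx' : x' ∈ A
  · rw [hgA x hx, hgA x' hx']; exact ⟨x, rfl, x', rfl, Or.inr hxx'⟩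
  · rw [hgA x hx, hgX x' hx']
    exact adjSets_of_mem_of_mem rfl ⟨hx, x', hx', hκs hxx'⟩
  · rw [hgX x hx, hgA x' hx']
    exact adjSets_of_mem_of_mem ⟨hx', x, hx, hxx'⟩ rfl
  · rw [hgX x hx] at hne ⊢
    obtain ⟨y, hy⟩ := hne
    rw [hgX x' hx']
    exact adjSets_of_mem_of_mem hy hy

/-- if `∅ ≠ A ⊆ X` and `Bd_X^κ(A)` is `κ`-connected, then the multivalued
function `g(x) = {x}` for `x ∈ A` and `g(x) = Bd_X^κ(A)` for `x ∉ A` is connectivity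
preserving. -/
theorem boundary_retraction_connectivity_preserving {X : Type*}
    (κ : X → X → Prop) (hκs : Symmetric κ) (hκi : Irreflexive κ)
    (A : Set X) (hA : A.Nonempty)
    (hBd : ConnectedIn κ (Bd κ A))
    (g : X → Set X)
    (hgA : ∀ x ∈ A, g x = {x})
    (hgX : ∀ x ∉ A, g x = Bd κ A) :
    ConnPreserving κ κ g :=
  boundary_retraction_connectivity_preserving_general κ hκs A hBd g hgA hgX
end

section
/- Let X₀ be a nonempty subset of a digital image (X,κ), and let F : (X₀,κ) ⊸ (Y,λ) be a connectivity preserving multivalued function such that F(X₀) is λ-connected. Then the multivalued function F' : X ⊸ Y defined by F'(x) = F(x) for x ∈ X₀ and F'(x) = F(X₀) for x ∈ X \ X₀ is a connectivity preserving extension of F. -/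
/-! A connected set either lies in `X₀`, where `F'` agrees with `F`, or it meets `X \ X₀`, and
then its image under `F'` is exactly `F(X₀)`, since every value of `F'` lies in `F(X₀)` and one
of them is all of it. -/

section mImage

variable {α β : Type*} {F G : α → Set β} {A : Set α}

theorem subset_mImage {x : α} (hx : x ∈ A) : F x ⊆ mImage F A :=
  Set.subset_biUnion_of_mem hx

theorem mImage_subset {S : Set β} (h : ∀ x ∈ A, F x ⊆ S) : mImage F A ⊆ S :=
  Set.iUnion₂_subset h

theorem mImage_congr (h : ∀ x ∈ A, F x = G x) : mImage F A = mImage G A :=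
  Set.iUnion₂_congr h

variable {X₀ : Set α} {F' : α → Set β}

theorem mImage_eq_of_subset (hF'in : ∀ x ∈ X₀, F' x = F x) (hA : A ⊆ X₀) :
    mImage F' A = mImage F A :=
  mImage_congr fun x hx => hF'in x (hA hx)

theorem mImage_eq_of_not_subset (hF'in : ∀ x ∈ X₀, F' x = F x)
    (hF'out : ∀ x ∉ X₀, F' x = mImage F X₀) (hA : ¬A ⊆ X₀) :
    mImage F' A = mImage F X₀ := by
  obtain ⟨x₀, hx₀A, hx₀⟩ := Set.not_subset.mp hA
  refine subset_antisymm (mImage_subset fun x _ => ?_) (hF'out x₀ hx₀ ▸ subset_mImage hx₀A)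
  by_cases hx : x ∈ X₀
  · exact hF'in x hx ▸ subset_mImage hx
  · exact (hF'out x hx).subset

end mImage

theorem connectivity_preserving_extension_general {X Y : Type*}
    (κ : X → X → Prop) (lam : Y → Y → Prop)
    (X₀ : Set X)
    (F : X → Set Y)
    (hFcp : ∀ A : Set X, A ⊆ X₀ → ConnectedIn κ A → ConnectedIn lam (mImage F A))
    (hFX₀ : ConnectedIn lam (mImage F X₀))
    (F' : X → Set Y)
    (hF'in : ∀ x ∈ X₀, F' x = F x)
    (hF'out : ∀ x ∉ X₀, F' x = mImage F X₀) :
    (∀ x ∈ X₀, F' x = F x) ∧ ConnPreserving κ lam F' := by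
  refine ⟨hF'in, fun A hA => ?_⟩
  by_cases hAX₀ : A ⊆ X₀
  · rw [mImage_eq_of_subset hF'in hAX₀]
    exact hFcp A hAX₀ hA
  · rw [mImage_eq_of_not_subset hF'in hF'out hAX₀]
    exact hFX₀

/-- a connectivity preserving multivalued function `F : (X₀,κ) ⊸ (Y,λ)`
with `F(X₀)` connected extends to the connectivity preserving multivalued function
`F' : X ⊸ Y` with `F'(x) = F(x)` for `x ∈ X₀` and `F'(x) = F(X₀)` otherwise. -/
theorem connectivity_preserving_extension {X Y : Type*}
    (κ : X → X → Prop) (lam : Y → Y → Prop)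
    (hκs : Symmetric κ) (hκi : Irreflexive κ)
    (hls : Symmetric lam) (hli : Irreflexive lam)
    (X₀ : Set X) (hX₀ : X₀.Nonempty)
    (F : X → Set Y)
    (hFcp : ∀ A : Set X, A ⊆ X₀ → ConnectedIn κ A → ConnectedIn lam (mImage F A))
    (hFX₀ : ConnectedIn lam (mImage F X₀))
    (F' : X → Set Y)
    (hF'in : ∀ x ∈ X₀, F' x = F x)
    (hF'out : ∀ x ∉ X₀, F' x = mImage F X₀) :
    (∀ x ∈ X₀, F' x = F x) ∧ ConnPreserving κ lam F' :=
  connectivity_preserving_extension_general κ lam X₀ F hFcp hFX₀ F' hF'in hF'out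
end

section
/- Let X₀ be a nonempty subset of a digital image (X,κ). Then X₀ is a weakly continuous multivalued retract of X; that is, there exists a weakly continuous multivalued function R : X ⊸ X₀ with R(a) = {a} for all a ∈ X₀. -/
/-!
Send each point of `X₀` to itself and every other point to all of `X₀`. Two adjacent points
both in `X₀` have adjacent singleton images; otherwise one image is `X₀` itself, which contains
the other (nonempty) image, so the two images meet.
-/

theorem AdjEq.refl {α : Type*} (adj : α → α → Prop) (a : α) : AdjEq adj a a :=
  Or.inl rfl

theorem adjSets_of_inter_nonempty {α : Type*} {adj : α → α → Prop} {A B : Set α}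
    (h : (A ∩ B).Nonempty) : AdjSets adj A B :=
  let ⟨a, haA, haB⟩ := h
  ⟨a, haA, a, haB, AdjEq.refl adj a⟩

theorem adjSets_singleton {α : Type*} {adj : α → α → Prop} {a b : α} (h : adj a b) :
    AdjSets adj {a} {b} :=
  ⟨a, rfl, b, rfl, Or.inr h⟩

section SingletonOrSet

variable {α : Type*} {A : Set α} {x y : α}

open Classical in
noncomputable def singletonOrSet (A : Set α) (x : α) : Set α :=
  if x ∈ A then {x} else A

theorem singletonOrSet_of_mem (hx : x ∈ A) : singletonOrSet A x = {x} :=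
  if_pos hx

theorem singletonOrSet_of_notMem (hx : x ∉ A) : singletonOrSet A x = A :=
  if_neg hx

theorem singletonOrSet_subset (x : α) : singletonOrSet A x ⊆ A := by
  by_cases hx : x ∈ A
  · simpa [singletonOrSet_of_mem hx] using hx
  · exact (singletonOrSet_of_notMem hx).subset

theorem singletonOrSet_nonempty (hA : A.Nonempty) (x : α) : (singletonOrSet A x).Nonempty := by
  by_cases hx : x ∈ A
  · simp [singletonOrSet_of_mem hx]
  · rwa [singletonOrSet_of_notMem hx]

theorem singletonOrSet_inter_nonempty (hA : A.Nonempty) (h : x ∉ A ∨ y ∉ A) :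
    (singletonOrSet A x ∩ singletonOrSet A y).Nonempty := by
  rcases h with hx | hy
  · rw [singletonOrSet_of_notMem hx, Set.inter_eq_right.mpr (singletonOrSet_subset y)]
    exact singletonOrSet_nonempty hA y
  · rw [singletonOrSet_of_notMem hy, Set.inter_eq_left.mpr (singletonOrSet_subset x)]
    exact singletonOrSet_nonempty hA x

theorem weaklyContinuous_singletonOrSet (adj : α → α → Prop) (hA : A.Nonempty) :
    WeaklyContinuous adj adj (singletonOrSet A) := by
  intro x x' hxx'
  by_cases hboth : x ∈ A ∧ x' ∈ A
  · rw [singletonOrSet_of_mem hboth.1, singletonOrSet_of_mem hboth.2]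
    exact adjSets_singleton hxx'
  · rw [not_and_or] at hboth
    exact adjSets_of_inter_nonempty (singletonOrSet_inter_nonempty hA hboth)

end SingletonOrSet

theorem weakly_continuous_multivalued_retract_general {X : Type*}
    (κ : X → X → Prop)
    (X₀ : Set X) (hX₀ : X₀.Nonempty) :
    ∃ R : X → Set X,
      (∀ x, R x ⊆ X₀) ∧ (∀ a ∈ X₀, R a = {a}) ∧ WeaklyContinuous κ κ R :=
  ⟨singletonOrSet X₀, singletonOrSet_subset, fun _ ha => singletonOrSet_of_mem ha,
    weaklyContinuous_singletonOrSet κ hX₀⟩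

/-- every nonempty subset `X₀` of a digital image `(X,κ)` is a weakly
continuous multivalued retract of `X`. -/
theorem weakly_continuous_multivalued_retract {X : Type*}
    (κ : X → X → Prop) (hκs : Symmetric κ) (hκi : Irreflexive κ)
    (X₀ : Set X) (hX₀ : X₀.Nonempty) :
    ∃ R : X → Set X,
      (∀ x, R x ⊆ X₀) ∧ (∀ a ∈ X₀, R a = {a}) ∧ WeaklyContinuous κ κ R :=
  weakly_continuous_multivalued_retract_general κ X₀ hX₀
end

section
/- Let (X,κ) ∧ (X',κ) be a wedge with X ∩ X' = {x₀} and let (Y,λ) ∧ (Y',λ) be a wedge with Y ∩ Y' = {y₀}. Let F : (X,κ) ⊸ (Y,λ) and F' : (X',κ) ⊸ (Y',λ) be multivalued functions with F(x₀) = {y₀} = F'(x₀). If F and F' are both strongly continuous, then F ∧ F' : X ∧ X' ⊸ Y ∧ Y' is strongly continuous. -/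
/-!
Every adjacency of the wedge `X ∧ X'` lies inside `X` or inside `X'`: an adjacent pair
meeting both pieces must contain the wedge point, which belongs to both. On `X` the wedge
function agrees with `F` and on `X'` with `G`, so strong continuity of `F ∧ G` at each
adjacent pair is that of `F` or of `G`.
-/

open Set

section

variable {α β : Type*}

def StronglyContinuousOn (adjX : α → α → Prop) (adjY : β → β → Prop)
    (F : α → Set β) (S : Set α) : Prop :=
  ∀ x ∈ S, ∀ x' ∈ S, adjX x x' →
    (∀ y ∈ F x, ∃ y' ∈ F x', AdjEq adjY y y') ∧
    (∀ y' ∈ F x', ∃ y ∈ F x, AdjEq adjY y y')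

theorem StronglyContinuousOn.congr {adjX : α → α → Prop} {adjY : β → β → Prop}
    {F H : α → Set β} {S : Set α} (hF : StronglyContinuousOn adjX adjY F S)
    (hHF : EqOn H F S) : StronglyContinuousOn adjX adjY H S := by
  intro x hx x' hx' hxx'
  rw [hHF hx, hHF hx']
  exact hF x hx x' hx' hxx'

theorem StronglyContinuous.of_cover {adjX : α → α → Prop} {adjY : β → β → Prop}
    {F : α → Set β} {S T : Set α}
    (hcover : ∀ x x', adjX x x' → (x ∈ S ∧ x' ∈ S) ∨ (x ∈ T ∧ x' ∈ T))
    (hS : StronglyContinuousOn adjX adjY F S) (hT : StronglyContinuousOn adjX adjY F T) :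
    StronglyContinuous adjX adjY F := by
  intro x x' hxx'
  rcases hcover x x' hxx' with ⟨hx, hx'⟩ | ⟨hx, hx'⟩
  · exact hS x hx x' hx' hxx'
  · exact hT x hx x' hx' hxx'

theorem mem_and_mem_or_of_wedge {κ : α → α → Prop} (hκs : Symmetric κ)
    {X X' : Set α} {x₀ : α} (hunion : X ∪ X' = univ) (hinter : X ∩ X' = {x₀})
    (hwedge : ∀ a ∈ X, ∀ b ∈ X', a ≠ x₀ → b ≠ x₀ → ¬ κ a b) {a b : α} (hab : κ a b) :
    (a ∈ X ∧ b ∈ X) ∨ (a ∈ X' ∧ b ∈ X') := by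
  have hx₀ : x₀ ∈ X ∩ X' := hinter ▸ rfl
  have ha : a ∈ X ∪ X' := hunion ▸ trivial
  have hb : b ∈ X ∪ X' := hunion ▸ trivial
  rcases ha with ha | ha <;> rcases hb with hb | hb
  · exact .inl ⟨ha, hb⟩
  · rcases eq_or_ne a x₀ with rfl | ha₀
    · exact .inr ⟨hx₀.2, hb⟩
    rcases eq_or_ne b x₀ with rfl | hb₀
    · exact .inl ⟨ha, hx₀.1⟩
    exact absurd hab (hwedge a ha b hb ha₀ hb₀)
  · rcases eq_or_ne a x₀ with rfl | ha₀
    · exact .inl ⟨hx₀.1, hb⟩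
    rcases eq_or_ne b x₀ with rfl | hb₀
    · exact .inr ⟨ha, hx₀.2⟩
    exact absurd (hκs hab) (hwedge b hb a ha hb₀ ha₀)
  · exact .inr ⟨ha, hb⟩

theorem Set.eqOn_of_forall_ne {f g : α → β} {s : Set α} {a : α}
    (h : ∀ x ∈ s, x ≠ a → f x = g x) (ha : f a = g a) : EqOn f g s := by
  intro x hx
  rcases eq_or_ne x a with rfl | hxa
  exacts [ha, h x hx hxa]

end

theorem wedge_strongly_continuous_general {W Z : Type*}
    (κ : W → W → Prop) (lam : Z → Z → Prop)
    (hκs : Symmetric κ)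
    -- `(W,κ) = (X,κ) ∧ (X',κ)` is a wedge with `X ∩ X' = {x₀}`
    (X X' : Set W) (x₀ : W)
    (hXunion : X ∪ X' = Set.univ) (hXinter : X ∩ X' = {x₀})
    (hXwedge : ∀ a ∈ X, ∀ b ∈ X', a ≠ x₀ → b ≠ x₀ → ¬ κ a b)
    -- `(Z,λ) = (Y,λ) ∧ (Y',λ)` is a wedge with `Y ∩ Y' = {y₀}`
    (y₀ : Z)
    -- `F : X ⊸ Y` and `G : X' ⊸ Y'` with `F(x₀) = {y₀} = G(x₀)`
    (F G : W → Set Z)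
    (hFx₀ : F x₀ = {y₀}) (hGx₀ : G x₀ = {y₀})
    -- `F` and `G` are strongly continuous
    (hFs : ∀ x ∈ X, ∀ x' ∈ X, κ x x' →
      (∀ y ∈ F x, ∃ y' ∈ F x', AdjEq lam y y') ∧
      (∀ y' ∈ F x', ∃ y ∈ F x, AdjEq lam y y'))
    (hGs : ∀ x ∈ X', ∀ x' ∈ X', κ x x' →
      (∀ y ∈ G x, ∃ y' ∈ G x', AdjEq lam y y') ∧
      (∀ y' ∈ G x', ∃ y ∈ G x, AdjEq lam y y'))
    -- `H = F ∧ G` is the wedge function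
    (H : W → Set Z)
    (hHF : ∀ a ∈ X, a ≠ x₀ → H a = F a)
    (hHG : ∀ a ∈ X', a ≠ x₀ → H a = G a)
    (hHx₀ : H x₀ = {y₀}) :
    StronglyContinuous κ lam H := by
  have hHX : StronglyContinuousOn κ lam H X :=
    StronglyContinuousOn.congr hFs (eqOn_of_forall_ne hHF (hHx₀.trans hFx₀.symm))
  have hHX' : StronglyContinuousOn κ lam H X' :=
    StronglyContinuousOn.congr hGs (eqOn_of_forall_ne hHG (hHx₀.trans hGx₀.symm))
  exact .of_cover (fun _ _ => mem_and_mem_or_of_wedge hκs hXunion hXinter hXwedge) hHX hHX'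

/-- the wedge `F ∧ F'` of strongly continuous multivalued functions
`F : (X,κ) ⊸ (Y,λ)`, `F' : (X',κ) ⊸ (Y',λ)` with `F(x₀) = {y₀} = F'(x₀)` is strongly
continuous on the wedge `X ∧ X'`. -/
theorem wedge_strongly_continuous {W Z : Type*}
    (κ : W → W → Prop) (lam : Z → Z → Prop)
    (hκs : Symmetric κ) (hκi : Irreflexive κ)
    (hls : Symmetric lam) (hli : Irreflexive lam)
    -- `(W,κ) = (X,κ) ∧ (X',κ)` is a wedge with `X ∩ X' = {x₀}`
    (X X' : Set W) (x₀ : W)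
    (hXunion : X ∪ X' = Set.univ) (hXinter : X ∩ X' = {x₀})
    (hXwedge : ∀ a ∈ X, ∀ b ∈ X', a ≠ x₀ → b ≠ x₀ → ¬ κ a b)
    -- `(Z,λ) = (Y,λ) ∧ (Y',λ)` is a wedge with `Y ∩ Y' = {y₀}`
    (Y Y' : Set Z) (y₀ : Z)
    (hYunion : Y ∪ Y' = Set.univ) (hYinter : Y ∩ Y' = {y₀})
    (hYwedge : ∀ a ∈ Y, ∀ b ∈ Y', a ≠ y₀ → b ≠ y₀ → ¬ lam a b)
    -- `F : X ⊸ Y` and `G : X' ⊸ Y'` with `F(x₀) = {y₀} = G(x₀)`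
    (F G : W → Set Z)
    (hFY : ∀ x ∈ X, F x ⊆ Y) (hGY : ∀ x ∈ X', G x ⊆ Y')
    (hFx₀ : F x₀ = {y₀}) (hGx₀ : G x₀ = {y₀})
    -- `F` and `G` are strongly continuous
    (hFs : ∀ x ∈ X, ∀ x' ∈ X, κ x x' →
      (∀ y ∈ F x, ∃ y' ∈ F x', AdjEq lam y y') ∧
      (∀ y' ∈ F x', ∃ y ∈ F x, AdjEq lam y y'))
    (hGs : ∀ x ∈ X', ∀ x' ∈ X', κ x x' →
      (∀ y ∈ G x, ∃ y' ∈ G x', AdjEq lam y y') ∧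
      (∀ y' ∈ G x', ∃ y ∈ G x, AdjEq lam y y'))
    -- `H = F ∧ G` is the wedge function
    (H : W → Set Z)
    (hHF : ∀ a ∈ X, a ≠ x₀ → H a = F a)
    (hHG : ∀ a ∈ X', a ≠ x₀ → H a = G a)
    (hHx₀ : H x₀ = {y₀}) :
    StronglyContinuous κ lam H :=
  wedge_strongly_continuous_general κ lam hκs X X' x₀ hXunion hXinter hXwedge y₀ F G hFx₀ hGx₀ hFs
    hGs H hHF hHG hHx₀
end
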